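/- For a real number q with 0<q<1 and any integer n≥1, ∑_{k=1}^n ((1+q^k)/[k]_q) · ([n choose k]_q / [n+k choose k]_q) · q^{k^2} = ∑_{m=1}^n q^m/[m]_q. -/

import Mathlib

open Finset

/-- q-analogue of a natural number: [m]_q = (1-q^m)/(1-q). -/
noncomputable def qnum (q : ℝ) (m : ℕ) : ℝ := (1 - q ^ m) / (1 - q)

/-- q-Pochhammer (q;q)_n = ∏_{k=0}^{n-1} (1 - q^{k+1}). -/
noncomputable def qPoch (q : ℝ) (n : ℕ) : ℝ := ∏ k ∈ Finset.range n, (1 - q ^ (k + 1))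

/-- Gaussian q-binomial coefficient, 0 when m > n. -/
noncomputable def qbinom (q : ℝ) (n m : ℕ) : ℝ :=
  if m ≤ n then qPoch q n / (qPoch q m * qPoch q (n - m)) else 0

/-- q-multiple harmonic star sum H_n^*[s₁,…,s_m]. -/
noncomputable def qHstar (q : ℝ) : List ℕ → ℕ → ℝ
  | [], _ => 1
  | s :: rest, n => ∑ k ∈ Finset.Icc 1 n, q ^ k / qnum q k ^ s * qHstar q rest k

/-- q-multiple zeta star value ζ_q^*[s₁,…,s_m]. -/
noncomputable def qZetaStar (q : ℝ) : List ℕ → ℝ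
  | [] => 1
  | s :: rest => ∑' k : ℕ, q ^ (k + 1) / qnum q (k + 1) ^ s * qHstar q rest (k + 1)

/-- strict multiple harmonic sum ∑_{n ≥ k₁ > … > k_r ≥ 1} ∏ 1/k_j^{p_j}. -/
noncomputable def Hstrict : List ℕ → ℕ → ℝ
  | [], _ => 1
  | p :: rest, n => ∑ k ∈ Finset.Icc 1 n, (1 : ℝ) / (k : ℝ) ^ p * Hstrict rest (k - 1)

/-- binomial-weighted strict multiple harmonic sum Ĥ_n(p). -/
noncomputable def Hhat : List ℕ → ℕ → ℝ
  | [], _ => 1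
  | p :: rest, n => ∑ k ∈ Finset.Icc 1 n,
      ((n.choose k : ℝ) / ((n + k).choose n)) * ((1 : ℝ) / (k : ℝ) ^ p) * Hstrict rest (k - 1)

/-- ordinary multiple harmonic star sum H_n^*(s₁,…,s_m). -/
noncomputable def HstarO : List ℕ → ℕ → ℝ
  | [], _ => 1
  | s :: rest, n => ∑ k ∈ Finset.Icc 1 n, (1 : ℝ) / (k : ℝ) ^ s * HstarO rest k

/-- ordinary multiple zeta star value. -/
noncomputable def zetaStarO : List ℕ → ℝ
  | [] => 1
  | s :: rest => ∑' k : ℕ, (1 : ℝ) / ((k : ℝ) + 1) ^ s * HstarO rest (k + 1)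

/-- Merge a list of parts according to a comma(true)/plus(false) pattern. -/
def mergeComp : ℕ → List ℕ → List Bool → List ℕ
  | a, [], _ => [a]
  | a, _ :: _, [] => [a]
  | a, b :: t, true :: bs => a :: mergeComp b t bs
  | a, b :: t, false :: bs => mergeComp (a + b) t bs

/-!
Write `R n k = qbinom q n k / qbinom q (n + k) k = (q;q)_n ^ 2 / ((q;q)_{n-k} (q;q)_{n+k})`.
We induct on `n`. Since `R (n+1) k - R n k = q^(n+1-k) (1 - q^k)^2 R (n+1) k / (1 - q^(n+1))^2`,
the increment of the `k`-th summand is `(1 - q) q^(n+1) / (1 - q^(n+1))^2` times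
`q^(k(k-1)) (1 - q^(2k)) R (n+1) k`. By the shift relation
`(1 - q^(m+k+1)) R m (k+1) = (1 - q^(m-k)) R m k` this is `G k - G (k+1)` for
`G k = q^(k(k-1)) (1 - q^(n+1+k)) R (n+1) k`, so the increments telescope to
`G 1 - G (n+2) = 1 - q^(n+1)` times the prefactor, which is `q^(n+1) / [n+1]_q`.
-/

lemma qPoch_succ (q : ℝ) (n : ℕ) : qPoch q (n + 1) = qPoch q n * (1 - q ^ (n + 1)) :=
  prod_range_succ _ _

section

variable {q : ℝ}

lemma one_sub_pow_ne_zero (hq : ∀ j ≠ 0, q ^ j ≠ 1) {j : ℕ} (hj : j ≠ 0) : 1 - q ^ j ≠ 0 :=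
  sub_ne_zero.2 (hq j hj).symm

lemma qPoch_ne_zero (hq : ∀ j ≠ 0, q ^ j ≠ 1) (n : ℕ) : qPoch q n ≠ 0 :=
  prod_ne_zero_iff.2 fun i _ => one_sub_pow_ne_zero hq i.succ_ne_zero

lemma qbinom_div_qbinom_add (hq : ∀ j ≠ 0, q ^ j ≠ 1) {n k : ℕ} (hk : k ≤ n) :
    qbinom q n k / qbinom q (n + k) k = qPoch q n ^ 2 / (qPoch q (n - k) * qPoch q (n + k)) := by
  have := qPoch_ne_zero hq k
  have := qPoch_ne_zero hq (n - k)
  have := qPoch_ne_zero hq (n + k)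
  rw [qbinom, qbinom, if_pos hk, if_pos (by omega), Nat.add_sub_cancel]
  field_simp

lemma qbinom_div_qbinom_add_of_lt {n k : ℕ} (h : n < k) :
    qbinom q n k / qbinom q (n + k) k = 0 := by
  rw [qbinom, if_neg h.not_ge, zero_div]

/-- For `m ≤ k` both sides vanish, the right one because `m - k` truncates to `0`. -/
lemma one_sub_pow_mul_qbinom_ratio_succ (hq : ∀ j ≠ 0, q ^ j ≠ 1) (m k : ℕ) :
    (1 - q ^ (m + (k + 1))) * (qbinom q m (k + 1) / qbinom q (m + (k + 1)) (k + 1))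
      = (1 - q ^ (m - k)) * (qbinom q m k / qbinom q (m + k) k) := by
  rcases lt_or_ge k m with hkm | hmk
  · obtain ⟨j, rfl⟩ := Nat.exists_eq_add_of_lt hkm
    have := qPoch_ne_zero hq j
    have := qPoch_ne_zero hq (k + j + 1 + k)
    have := one_sub_pow_ne_zero hq (j := j + 1) (by omega)
    have := one_sub_pow_ne_zero hq (j := k + j + 1 + k + 1) (by omega)
    rw [qbinom_div_qbinom_add hq hkm, qbinom_div_qbinom_add hq hkm.le,
      show k + j + 1 - (k + 1) = j by omega, show k + j + 1 - k = j + 1 by omega,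
      show k + j + 1 + (k + 1) = k + j + 1 + k + 1 by omega, qPoch_succ q j,
      qPoch_succ q (k + j + 1 + k)]
    field_simp
  · rw [qbinom_div_qbinom_add_of_lt (by omega), Nat.sub_eq_zero_of_le hmk]
    ring

lemma qbinom_ratio_succ_sub (hq : ∀ j ≠ 0, q ^ j ≠ 1) (n k : ℕ) :
    q ^ k * (1 - q ^ (n + 1)) ^ 2 *
        (qbinom q (n + 1) k / qbinom q (n + 1 + k) k - qbinom q n k / qbinom q (n + k) k)
      = q ^ (n + 1) * (1 - q ^ k) ^ 2 * (qbinom q (n + 1) k / qbinom q (n + 1 + k) k) := by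
  rcases le_or_gt k n with hkn | hnk
  · obtain ⟨j, rfl⟩ := Nat.exists_eq_add_of_le hkn
    have := qPoch_ne_zero hq j
    have := qPoch_ne_zero hq (k + j + k)
    have := one_sub_pow_ne_zero hq (j := j + 1) (by omega)
    have := one_sub_pow_ne_zero hq (j := k + j + k + 1) (by omega)
    rw [qbinom_div_qbinom_add hq hkn, qbinom_div_qbinom_add hq (by omega),
      show k + j + 1 - k = j + 1 by omega, show k + j - k = j by omega,
      show k + j + 1 + k = k + j + k + 1 by omega, qPoch_succ q j, qPoch_succ q (k + j),
      qPoch_succ q (k + j + k)]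
    field_simp
    ring
  · rw [qbinom_div_qbinom_add_of_lt hnk]
    obtain rfl | hlt : k = n + 1 ∨ n + 1 < k := by omega
    · ring
    · rw [qbinom_div_qbinom_add_of_lt hlt]
      ring

noncomputable def telescopingTerm (q : ℝ) (m j : ℕ) : ℝ :=
  q ^ (j * (j - 1)) * (1 - q ^ (m + j)) * (qbinom q m j / qbinom q (m + j) j)

lemma summand_succ_sub (hq : ∀ j ≠ 0, q ^ j ≠ 1) {n k : ℕ} (hk0 : k ≠ 0) (hkn : k ≤ n + 1) :
    (1 + q ^ k) / qnum q k * (qbinom q (n + 1) k / qbinom q (n + 1 + k) k) * q ^ (k ^ 2)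
      - (1 + q ^ k) / qnum q k * (qbinom q n k / qbinom q (n + k) k) * q ^ (k ^ 2)
      = (1 - q) * q ^ (n + 1) / (1 - q ^ (n + 1)) ^ 2
        * (telescopingTerm q (n + 1) k - telescopingTerm q (n + 1) (k + 1)) := by
  have hstep := qbinom_ratio_succ_sub hq n k
  have hshift := one_sub_pow_mul_qbinom_ratio_succ hq (n + 1) k
  have e1 : q ^ (k ^ 2) = q ^ (k * (k - 1)) * q ^ k := by
    rw [← pow_add]; congr 1; cases k <;> simp; ring
  have e2 : q ^ ((k + 1) * (k + 1 - 1)) = q ^ (k * (k - 1)) * q ^ k * q ^ k := by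
    rw [← pow_add, ← pow_add]; congr 1; cases k <;> simp; ring
  have e3 : q ^ (n + 1) = q ^ (n + 1 - k) * q ^ k := by
    rw [← pow_add, Nat.sub_add_cancel hkn]
  have h1q : 1 - q ≠ 0 := by simpa using one_sub_pow_ne_zero hq (j := 1) one_ne_zero
  have hx := one_sub_pow_ne_zero hq hk0
  have hy := one_sub_pow_ne_zero hq (j := n + 1) (by omega)
  unfold telescopingTerm qnum
  rw [e1, e2]
  field_simp
  linear_combination (1 + q ^ k) * q ^ (k * (k - 1)) * hstep
    + (1 - q ^ k) * q ^ (k * (k - 1)) * q ^ (n + 1) * (q ^ k) ^ 2 * hshift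
    + (1 - q ^ k) * q ^ (k * (k - 1)) * q ^ (n + 1) * q ^ k
      * (qbinom q (n + 1) k / qbinom q (n + 1 + k) k) * e3

lemma sum_summand_succ_sub (hq : ∀ j ≠ 0, q ^ j ≠ 1) (n : ℕ) :
    ∑ k ∈ Icc 1 (n + 1),
      ((1 + q ^ k) / qnum q k * (qbinom q (n + 1) k / qbinom q (n + 1 + k) k) * q ^ (k ^ 2)
        - (1 + q ^ k) / qnum q k * (qbinom q n k / qbinom q (n + k) k) * q ^ (k ^ 2))
      = q ^ (n + 1) / qnum q (n + 1) := by
  set G := telescopingTerm q (n + 1)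
  have hG1 : G 1 = 1 - q ^ (n + 1) := by
    have hshift := one_sub_pow_mul_qbinom_ratio_succ hq (n + 1) 0
    have hP := qPoch_ne_zero hq (n + 1)
    rw [qbinom_div_qbinom_add hq (Nat.zero_le _)] at hshift
    simp only [zero_add, Nat.sub_zero, add_zero] at hshift
    simp only [G, telescopingTerm, Nat.sub_self, mul_zero, pow_zero, one_mul]
    rw [hshift]
    field_simp
  have hGlast : G (n + 1 + 1) = 0 := by
    simp only [G, telescopingTerm, qbinom_div_qbinom_add_of_lt (lt_add_one (n + 1)), mul_zero]
  have h1q : 1 - q ≠ 0 := by simpa using one_sub_pow_ne_zero hq (j := 1) one_ne_zero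
  have hy := one_sub_pow_ne_zero hq (j := n + 1) (by omega)
  calc _ = ∑ k ∈ Icc 1 (n + 1), (1 - q) * q ^ (n + 1) / (1 - q ^ (n + 1)) ^ 2 * (G k - G (k + 1)) :=
        sum_congr rfl fun k hk =>
          summand_succ_sub hq (Nat.one_le_iff_ne_zero.1 (mem_Icc.1 hk).1) (mem_Icc.1 hk).2
    _ = (1 - q) * q ^ (n + 1) / (1 - q ^ (n + 1)) ^ 2 * (G 1 - G (n + 1 + 1)) := by
        rw [← mul_sum, ← neg_sub (G (n + 1 + 1)), ← sum_Icc_sub (Nat.le_add_left 1 n),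
          ← sum_neg_distrib]
        simp only [neg_sub]
    _ = q ^ (n + 1) / qnum q (n + 1) := by
        rw [hG1, hGlast, sub_zero, qnum]
        field_simp

end

theorem stmt2_general (q : ℝ) (hq0 : 0 < q) (hq1 : q < 1) (n : ℕ) :
    ∑ k ∈ Finset.Icc 1 n,
      (1 + q ^ k) / qnum q k * (qbinom q n k / qbinom q (n + k) k) * q ^ (k ^ 2)
    = ∑ m ∈ Finset.Icc 1 n, q ^ m / qnum q m := by
  have hq : ∀ j ≠ 0, q ^ j ≠ 1 := fun j hj => (pow_lt_one₀ hq0.le hq1 hj).ne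
  induction n with
  | zero => simp
  | succ n ih =>
    have hlast : (1 + q ^ (n + 1)) / qnum q (n + 1)
        * (qbinom q n (n + 1) / qbinom q (n + (n + 1)) (n + 1)) * q ^ ((n + 1) ^ 2) = 0 := by
      rw [qbinom_div_qbinom_add_of_lt (lt_add_one n), mul_zero, zero_mul]
    rw [sum_Icc_succ_top (Nat.le_add_left 1 n) fun m => q ^ m / qnum q m, ← ih,
      ← sum_summand_succ_sub hq n, sum_sub_distrib, sum_Icc_succ_top (Nat.le_add_left 1 n)
        fun k => (1 + q ^ k) / qnum q k * (qbinom q n k / qbinom q (n + k) k) * q ^ (k ^ 2), hlast]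
    ring

theorem stmt2 (q : ℝ) (hq0 : 0 < q) (hq1 : q < 1) (n : ℕ) (hn : 1 ≤ n) :
    ∑ k ∈ Finset.Icc 1 n,
      (1 + q ^ k) / qnum q k * (qbinom q n k / qbinom q (n + k) k) * q ^ (k ^ 2)
    = ∑ m ∈ Finset.Icc 1 n, q ^ m / qnum q m :=
  stmt2_general q hq0 hq1 n
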